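/- arXiv:2302.01687 — 4 statements merged into one kernel-verified Lean document; each statement's English description precedes it below -/
import Mathlib

section
/- In a finite DAG with a unique initial state s_0 and terminal states X, if a positive state flow function F, forward policy P_F (a probability distribution over children of each nonterminal state), and backward policy P_B (a probability distribution over parents of each noninitial state) satisfy the detailed balance constraint F(s)·P_F(s'|s) = F(s')·P_B(s|s') on every edge, and F(x) = R(x) for all terminal states x, then the marginal probability that a trajectory sampled from P_F starting at s_0 terminates at x equals R(x)/Z where Z = F(s_0). -/
/-- Product of the transition values `P s_{i-1} s_i` along a list of states. -/
def pathProd {S : Type*} (P : S → S → ℝ) (l : List S) : ℝ :=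
  ((l.zip l.tail).map fun p => P p.1 p.2).prod

/-- The complete trajectories from `s0` to `x`: nonempty directed paths of the DAG
starting at `s0` and ending at `x`. -/
def Traj {S : Type*} (A : S → S → Prop) (s0 x : S) : Type _ :=
  {l : List S // l.Chain' A ∧ l.head? = some s0 ∧ l.getLast? = some x}

namespace GFlowAux

lemma pathProd_single {S : Type*} (P : S → S → ℝ) (a : S) : pathProd P [a] = 1 := rfl

lemma pathProd_cons_cons {S : Type*} (P : S → S → ℝ) (a b : S) (l : List S) :
    pathProd P (a :: b :: l) = P a b * pathProd P (b :: l) := by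
  simp [pathProd]

lemma pathProd_concat {S : Type*} (P : S → S → ℝ) (a b : S) :
    ∀ (l : List S), l.getLast? = some b → pathProd P (l ++ [a]) = pathProd P l * P b a
  | [], h => by simp at h
  | [c], h => by
      simp only [List.getLast?_singleton, Option.some.injEq] at h
      subst h
      simp [pathProd_single, pathProd_cons_cons]
  | c :: d :: t, h => by
      have h' : (d :: t).getLast? = some b := by
        rwa [List.getLast?_cons_cons] at h
      rw [List.cons_append, List.cons_append, pathProd_cons_cons,
        ← List.cons_append, pathProd_concat P a b (d :: t) h', pathProd_cons_cons,
        mul_assoc]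

lemma pathProd_reverse {S : Type*} (P : S → S → ℝ) :
    ∀ (l : List S), pathProd P l.reverse = pathProd (flip P) l
  | [] => rfl
  | [a] => rfl
  | a :: b :: t => by
      have hl : (b :: t).reverse.getLast? = some b := by
        rw [List.getLast?_reverse]; rfl
      rw [List.reverse_cons, pathProd_concat P a b _ hl, pathProd_reverse P (b :: t),
        pathProd_cons_cons]
      unfold flip; ring

section
variable {S : Type*} [Fintype S] [DecidableEq S]

lemma chain'_nodup {A : S → S → Prop} (hacyc : ∀ s, ¬ Relation.TransGen A s s)
    {l : List S} (h : l.Chain' A) : l.Nodup := by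
  have h2 : l.Chain' (Relation.TransGen A) := h.imp fun _ _ hab => Relation.TransGen.single hab
  have hp : l.Pairwise (Relation.TransGen A) := List.isChain_iff_pairwise.mp h2
  refine List.Pairwise.imp ?_ hp
  intro a b h hab
  exact hacyc b (hab ▸ h)

lemma traj_finite (A : S → S → Prop) (hacyc : ∀ s, ¬ Relation.TransGen A s s)
    (s0 x : S) :
    {l : List S | l.Chain' A ∧ l.head? = some s0 ∧ l.getLast? = some x}.Finite := by
  apply (List.finite_length_le S (Fintype.card S)).subset
  rintro l ⟨h1, -, -⟩
  exact (chain'_nodup hacyc h1).length_le_card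

lemma back_sum (A : S → S → Prop) [DecidableRel A]
    (hacyc : ∀ s, ¬ Relation.TransGen A s s)
    (s0 : S) (hinit : ∀ s, ¬ A s s0)
    (huniq : ∀ s', (∀ s, ¬ A s s') → s' = s0)
    (PB : S → S → ℝ)
    (hPBsum : ∀ s', (∃ s, A s s') →
      ∑ s ∈ Finset.univ.filter (fun s => A s s'), PB s s' = 1)
    (hacyc' : ∀ s, ¬ Relation.TransGen (flip A) s s) :
    ∀ s : S,
      ∑ r ∈ (traj_finite (flip A) hacyc' s s0).toFinset, pathProd (flip PB) r = 1 := by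
  haveI : IsIrrefl S (Relation.TransGen A) := ⟨hacyc⟩
  have wfT : WellFounded (Relation.TransGen A) :=
    Finite.wellFounded_of_trans_of_irrefl _
  have wf : WellFounded A := Subrelation.wf (fun h => Relation.TransGen.single h) wfT
  intro s
  induction s using wf.induction with
  | _ s IH =>
  by_cases hs : s = s0
  · subst hs
    have hset : (traj_finite (flip A) hacyc' s s).toFinset = {[s]} := by
      ext r
      simp only [Set.Finite.mem_toFinset, Set.mem_setOf_eq, Finset.mem_singleton]
      constructor
      · rintro ⟨hc, hh, hl⟩
        cases r with
        | nil => simp at hh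
        | cons a t =>
          obtain rfl : a = s := by simpa using hh
          cases t with
          | nil => rfl
          | cons s' t' =>
            replace hc := List.isChain_cons_cons.mp hc
            exact absurd hc.1 (hinit s')
      · rintro rfl
        exact ⟨List.isChain_singleton s, rfl, rfl⟩
    rw [hset, Finset.sum_singleton, pathProd_single]
  · have hpar : ∃ s', A s' s := by
      by_contra h
      push_neg at h
      exact hs (huniq s h)
    set parents : Finset S := Finset.univ.filter (fun s' => A s' s) with hparents
    have hset : (traj_finite (flip A) hacyc' s s0).toFinset =
        parents.biUnion (fun s' => ((traj_finite (flip A) hacyc' s' s0).toFinset).image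
          (fun t => s :: t)) := by
      ext r
      simp only [Set.Finite.mem_toFinset, Set.mem_setOf_eq, Finset.mem_biUnion,
        Finset.mem_image, hparents, Finset.mem_filter, Finset.mem_univ, true_and]
      constructor
      · rintro ⟨hc, hh, hl⟩
        cases r with
        | nil => simp at hh
        | cons a t =>
          obtain rfl : a = s := by simpa using hh
          cases t with
          | nil =>
            simp only [List.getLast?_singleton, Option.some.injEq] at hl
            exact absurd hl hs
          | cons s' t' =>
            replace hc := List.isChain_cons_cons.mp hc
            rw [List.getLast?_cons_cons] at hl
            exact ⟨s', hc.1, s' :: t', ⟨hc.2, rfl, hl⟩, rfl⟩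
      · rintro ⟨s', hA, t, ⟨hc, hh, hl⟩, rfl⟩
        cases t with
        | nil => simp at hh
        | cons b t' =>
          obtain rfl : b = s' := by simpa using hh
          refine ⟨List.isChain_cons_cons.mpr ⟨hA, hc⟩, rfl, ?_⟩
          rwa [List.getLast?_cons_cons]
    rw [hset, Finset.sum_biUnion]
    · have hterm : ∀ s' ∈ parents,
          ∑ r ∈ ((traj_finite (flip A) hacyc' s' s0).toFinset).image (fun t => s :: t),
            pathProd (flip PB) r = PB s' s := by
        intro s' hs'
        rw [Finset.sum_image (fun a _ b _ hab => by simpa using hab)]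
        have hA : A s' s := by
          rw [hparents, Finset.mem_filter] at hs'
          exact hs'.2
        have : ∀ t ∈ (traj_finite (flip A) hacyc' s' s0).toFinset,
            pathProd (flip PB) (s :: t) = PB s' s * pathProd (flip PB) t := by
          intro t ht
          rw [Set.Finite.mem_toFinset] at ht
          obtain ⟨hc, hh, hl⟩ := ht
          cases t with
          | nil => simp at hh
          | cons b t' =>
            obtain rfl : b = s' := by simpa using hh
            simp [pathProd_cons_cons, flip]
        rw [Finset.sum_congr rfl this, ← Finset.mul_sum, IH s' hA, mul_one]
      rw [Finset.sum_congr rfl hterm]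
      exact hPBsum s hpar
    · intro s1 h1 s2 h2 hne
      simp only [Finset.disjoint_left]
      rintro r hr1 hr2
      simp only [Finset.mem_coe, Finset.mem_image, Set.Finite.mem_toFinset] at hr1 hr2
      obtain ⟨t1, ⟨_, hh1, _⟩, rfl⟩ := hr1
      obtain ⟨t2, ⟨_, hh2, _⟩, heq⟩ := hr2
      have : t2 = t1 := by simpa using heq
      subst this
      rw [hh1] at hh2
      exact hne (by injection hh2)

end

lemma telescope' {S : Type*} (A : S → S → Prop) (F : S → ℝ) (PF PB : S → S → ℝ)
    (hDB : ∀ s s', A s s' → F s * PF s s' = F s' * PB s s') :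
    ∀ (l : List S) (a b : S), l.Chain' A → l.head? = some a → l.getLast? = some b →
      F a * pathProd PF l = F b * pathProd PB l
  | [], a, b, _, hh, _ => by simp at hh
  | [c], a, b, _, hh, hl => by
      obtain rfl : c = a := by simpa using hh
      obtain rfl : c = b := by simpa using hl
      rfl
  | c :: d :: t, a, b, hc, hh, hl => by
      obtain rfl : c = a := by simpa using hh
      replace hc := List.isChain_cons_cons.mp hc
      rw [List.getLast?_cons_cons] at hl
      have ih := telescope' A F PF PB hDB (d :: t) d b hc.2 rfl hl
      rw [pathProd_cons_cons PF, pathProd_cons_cons PB]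
      calc F c * (PF c d * pathProd PF (d :: t))
          = (F c * PF c d) * pathProd PF (d :: t) := by ring
        _ = (F d * PB c d) * pathProd PF (d :: t) := by rw [hDB c d hc.1]
        _ = PB c d * (F d * pathProd PF (d :: t)) := by ring
        _ = PB c d * (F b * pathProd PB (d :: t)) := by rw [ih]
        _ = F b * (PB c d * pathProd PB (d :: t)) := by ring

end GFlowAux

open GFlowAux in
/-- In a finite DAG with unique initial state `s0` and terminal states
(those without outgoing edges), if a positive state flow `F`, forward policy `PF`
(a probability distribution over the children of each nonterminal state) and backward
policy `PB` (a probability distribution over the parents of each noninitial state,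
with `PB s s' = P_B(s|s')`) satisfy detailed balance on every edge, and `F x = R x`
for terminal states `x`, then the marginal probability that a trajectory sampled from
`PF` starting at `s0` terminates at a terminal state `x` equals `R x / Z` with
`Z = F s0`. -/
theorem stmt_2 {S : Type*} [Fintype S] [DecidableEq S]
    (A : S → S → Prop) [DecidableRel A]
    (hacyc : ∀ s, ¬ Relation.TransGen A s s)
    (s0 : S) (hinit : ∀ s, ¬ A s s0)
    (huniq : ∀ s', (∀ s, ¬ A s s') → s' = s0)
    (F : S → ℝ) (hFpos : ∀ s, 0 < F s)
    (PF PB : S → S → ℝ)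
    (hPFnonneg : ∀ s s', 0 ≤ PF s s')
    (hPFsupp : ∀ s s', ¬ A s s' → PF s s' = 0)
    (hPFsum : ∀ s, (∃ s', A s s') →
      ∑ s' ∈ Finset.univ.filter (fun s' => A s s'), PF s s' = 1)
    (hPBnonneg : ∀ s s', 0 ≤ PB s s')
    (hPBsupp : ∀ s s', ¬ A s s' → PB s s' = 0)
    (hPBsum : ∀ s', (∃ s, A s s') →
      ∑ s ∈ Finset.univ.filter (fun s => A s s'), PB s s' = 1)
    (hDB : ∀ s s', A s s' → F s * PF s s' = F s' * PB s s')
    (R : S → ℝ)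
    (hR : ∀ x, (∀ s', ¬ A x s') → F x = R x)
    (x : S) (hx : ∀ s', ¬ A x s') :
    (∑' τ : Traj A s0 x, pathProd PF τ.1) = R x / F s0 := by
  classical
  have hacyc' : ∀ s, ¬ Relation.TransGen (flip A) s s := by
    intro s h
    exact hacyc s (Relation.transGen_swap.mp h)
  have hfin := traj_finite A hacyc s0 x
  haveI : Finite (Traj A s0 x) := hfin.to_subtype
  haveI : Fintype (Traj A s0 x) := Fintype.ofFinite _
  rw [tsum_fintype]
  have hstep1 : ∑ τ : Traj A s0 x, pathProd PF τ.1 = ∑ l ∈ hfin.toFinset, pathProd PF l := by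
    refine Finset.sum_bij (fun (τ : Traj A s0 x) _ => τ.1) ?_ ?_ ?_ ?_
    · intro τ _
      rw [Set.Finite.mem_toFinset]
      exact τ.2
    · intro τ1 _ τ2 _ h
      exact Subtype.ext h
    · intro l hl
      rw [Set.Finite.mem_toFinset] at hl
      exact ⟨⟨l, hl⟩, Finset.mem_univ _, rfl⟩
    · intro τ _
      rfl
  rw [hstep1]
  have hF0 : F s0 ≠ 0 := (hFpos s0).ne'
  have hstep2 : ∀ l ∈ hfin.toFinset, pathProd PF l = F x / F s0 * pathProd PB l := by
    intro l hl
    rw [Set.Finite.mem_toFinset] at hl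
    obtain ⟨hc, hh, hlast⟩ := hl
    have := telescope' A F PF PB hDB l s0 x hc hh hlast
    field_simp
    linarith [this]
  rw [Finset.sum_congr rfl hstep2, ← Finset.mul_sum]
  have hstep3 : ∑ l ∈ hfin.toFinset, pathProd PB l =
      ∑ r ∈ (traj_finite (flip A) hacyc' x s0).toFinset, pathProd (flip PB) r := by
    refine Finset.sum_nbij' (fun l => l.reverse) (fun r => r.reverse) ?_ ?_ ?_ ?_ ?_
    · intro l hl
      rw [Set.Finite.mem_toFinset] at hl ⊢
      obtain ⟨hc, hh, hlast⟩ := hl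
      refine ⟨List.isChain_reverse.mpr ?_, ?_, ?_⟩
      · exact hc
      · rwa [List.head?_reverse]
      · rwa [List.getLast?_reverse]
    · intro r hr
      rw [Set.Finite.mem_toFinset] at hr ⊢
      obtain ⟨hc, hh, hlast⟩ := hr
      refine ⟨List.isChain_reverse.mpr hc, ?_, ?_⟩
      · rwa [List.head?_reverse]
      · rwa [List.getLast?_reverse]
    · intro l _; exact List.reverse_reverse l
    · intro r _; exact List.reverse_reverse r
    · intro l _
      exact (pathProd_reverse (flip PB) l).symm
  rw [hstep3, back_sum A hacyc s0 hinit huniq PB hPBsum hacyc' x, mul_one, hR x hx]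
end

section
/- If the trajectory balance constraint Z·∏_{i=1}^n P_F(s_i|s_{i−1}) = R(s_n)·∏_{i=1}^n P_B(s_{i−1}|s_i) holds for every complete trajectory s_0 → ⋯ → s_n in a finite DAG, where P_B is a fixed backward policy summing to 1 over parents, then the marginal terminating distribution satisfies P_F^⊤(x) = R(x)/Z for each terminal state x, and consequently Z = Σ_{x ∈ X} R(x). -/
set_option linter.unusedSectionVars false
set_option linter.unusedVariables false

section Aux

variable {S : Type*} [Fintype S] [DecidableEq S] (A : S → S → Prop) [DecidableRel A]

lemma chain'_nodup (hacyc : ∀ s, ¬ Relation.TransGen A s s) {l : List S}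
    (hl : l.Chain' A) : l.Nodup := by
  have h1 : l.Chain' (Relation.TransGen A) := hl.imp fun _ _ h => .single h
  haveI : IsTrans S (Relation.TransGen A) := ⟨fun _ _ _ => Relation.TransGen.trans⟩
  refine (List.isChain_iff_pairwise.mp h1).imp ?_
  intro a b h heq
  exact hacyc a (heq ▸ h)

def trajSet (s x : S) : Set (List S) :=
  {l | l.Chain' A ∧ l.head? = some s ∧ l.getLast? = some x}

lemma trajSet_finite (hacyc : ∀ s, ¬ Relation.TransGen A s s) (s x : S) :
    (trajSet A s x).Finite := by
  apply (List.finite_length_le S (Fintype.card S)).subset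
  intro l hl
  exact (chain'_nodup A hacyc hl.1).length_le_card

noncomputable def trajFS (hacyc : ∀ s, ¬ Relation.TransGen A s s) (s x : S) :
    Finset (List S) := (trajSet_finite A hacyc s x).toFinset

lemma mem_trajFS {hacyc : ∀ s, ¬ Relation.TransGen A s s} {s x : S} {l : List S} :
    l ∈ trajFS A hacyc s x ↔ l.Chain' A ∧ l.head? = some s ∧ l.getLast? = some x := by
  simp [trajFS, Set.Finite.mem_toFinset, trajSet]

lemma pathProd_singleton (P : S → S → ℝ) (a : S) : pathProd P [a] = 1 := rfl

lemma pathProd_cons (P : S → S → ℝ) (a b : S) (t : List S) :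
    pathProd P (a :: b :: t) = P a b * pathProd P (b :: t) := by
  simp [pathProd]

lemma pathProd_append_last (P : S → S → ℝ) :
    ∀ (l : List S) (p x : S), l.getLast? = some p →
      pathProd P (l ++ [x]) = pathProd P l * P p x
  | [], p, x, h => by simp at h
  | [a], p, x, h => by
      simp only [List.getLast?_singleton, Option.some.injEq] at h
      subst h
      simp [pathProd_cons, pathProd_singleton]
  | a :: b :: t, p, x, h => by
      rw [List.getLast?_cons_cons] at h
      rw [List.cons_append, List.cons_append, pathProd_cons, ← List.cons_append,
        pathProd_append_last P (b :: t) p x h, pathProd_cons, mul_assoc]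

variable (hacyc : ∀ s, ¬ Relation.TransGen A s s)

/-- Forward decomposition: trajectories from `s` to `x ≠ s` split by the first step. -/
lemma traj_decomp_fwd (s x : S) (hne : s ≠ x) :
    trajFS A hacyc s x =
      (Finset.univ.filter (fun s' => A s s')).biUnion
        (fun s' => (trajFS A hacyc s' x).image (List.cons s)) := by
  ext l
  simp only [Finset.mem_biUnion, Finset.mem_filter, Finset.mem_univ, true_and,
    Finset.mem_image, mem_trajFS]
  constructor
  · rintro ⟨hc, hh, hg⟩
    match l with
    | [] => simp at hh
    | [a] =>
        simp only [List.head?_cons, Option.some.injEq] at hh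
        simp only [List.getLast?_singleton, Option.some.injEq] at hg
        exact absurd (hh.symm.trans hg) hne
    | a :: b :: t =>
        simp only [List.head?_cons, Option.some.injEq] at hh
        subst hh
        replace hc := List.isChain_cons_cons.mp hc
        refine ⟨b, hc.1, b :: t, ⟨hc.2, rfl, ?_⟩, rfl⟩
        rw [List.getLast?_cons_cons] at hg
        exact hg
  · rintro ⟨s', hA, t, ⟨hc, hh, hg⟩, rfl⟩
    match t with
    | [] => simp at hh
    | b :: t' =>
        simp only [List.head?_cons, Option.some.injEq] at hh
        subst hh
        exact ⟨List.isChain_cons_cons.mpr ⟨hA, hc⟩, rfl, by rwa [List.getLast?_cons_cons]⟩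

/-- Backward decomposition: trajectories from `s0 ≠ x` to `x` split by the last step. -/
lemma traj_decomp_bwd (s0 x : S) (hne : s0 ≠ x) :
    trajFS A hacyc s0 x =
      (Finset.univ.filter (fun p => A p x)).biUnion
        (fun p => (trajFS A hacyc s0 p).image (fun l => l ++ [x])) := by
  ext l
  simp only [Finset.mem_biUnion, Finset.mem_filter, Finset.mem_univ, true_and,
    Finset.mem_image, mem_trajFS]
  constructor
  · rintro ⟨hc, hh, hg⟩
    have hlne : l ≠ [] := by rintro rfl; simp at hh
    have hdl : l.dropLast ++ [x] = l := List.dropLast_append_getLast? x hg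
    have hdlne : l.dropLast ≠ [] := by
      intro h
      rw [h, List.nil_append] at hdl
      rw [← hdl] at hh
      simp only [List.head?_cons, Option.some.injEq] at hh
      exact hne hh.symm
    set m := l.dropLast with hm
    have hp : m.getLast? = some (m.getLast hdlne) := List.getLast?_eq_getLast_of_ne_nil hdlne
    rw [← hdl] at hc hh
    replace hc := List.isChain_append.mp hc
    refine ⟨m.getLast hdlne, ?_, m, ⟨hc.1, ?_, hp⟩, hdl⟩
    · exact hc.2.2 _ hp x rfl
    · rwa [List.head?_append_of_ne_nil _ hdlne] at hh
  · rintro ⟨p, hA, t, ⟨hc, hh, hg⟩, rfl⟩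
    have htne : t ≠ [] := by rintro rfl; simp at hh
    refine ⟨List.isChain_append.mpr ⟨hc, List.isChain_singleton x, ?_⟩, ?_, ?_⟩
    · intro a ha y hy
      simp only [List.head?_cons, Option.mem_def, Option.some.injEq] at hy
      subst hy
      rw [Option.mem_def, hg] at ha
      cases ha
      exact hA
    · rwa [List.head?_append_of_ne_nil _ htne]
    · rw [List.getLast?_append_cons]
      rfl

end Aux

section Sums

variable {S : Type*} [Fintype S] [DecidableEq S] (A : S → S → Prop) [DecidableRel A]
variable (hacyc : ∀ s, ¬ Relation.TransGen A s s)

lemma trajFS_self (s : S) : trajFS A hacyc s s = {[s]} := by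
  ext l
  simp only [mem_trajFS, Finset.mem_singleton]
  constructor
  · rintro ⟨hc, hh, hg⟩
    match l with
    | [] => simp at hh
    | a :: t =>
      simp only [List.head?_cons, Option.some.injEq] at hh
      cases t with
      | nil => rw [hh]
      | cons b t' =>
        exfalso
        rw [List.getLast?_cons_cons] at hg
        obtain ⟨hne, hlast⟩ := List.mem_getLast?_eq_getLast (Option.mem_def.mpr hg)
        have hmem : a ∈ b :: t' := by
          rw [hh, hlast]
          exact List.getLast_mem hne
        have hnd := chain'_nodup A hacyc hc
        rw [List.nodup_cons] at hnd
        exact hnd.1 hmem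
  · rintro rfl
    exact ⟨List.isChain_singleton s, rfl, rfl⟩

lemma FSum_one (PF : S → S → ℝ)
    (hPFsum : ∀ s, (∃ s', A s s') →
      ∑ s' ∈ Finset.univ.filter (fun s' => A s s'), PF s s' = 1) :
    ∀ s : S, ∑ x ∈ Finset.univ.filter (fun x => ∀ s', ¬ A x s'),
      ∑ l ∈ trajFS A hacyc s x, pathProd PF l = 1 := by
  haveI : IsTrans S (fun a b : S => Relation.TransGen A b a) :=
    ⟨fun _ _ _ h1 h2 => h2.trans h1⟩
  haveI : IsIrrefl S (fun a b : S => Relation.TransGen A b a) := ⟨fun a h => hacyc a h⟩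
  have hwf := Finite.wellFounded_of_trans_of_irrefl (fun a b : S => Relation.TransGen A b a)
  intro s
  induction s using hwf.induction with
  | _ s IH =>
  by_cases hterm : ∀ s', ¬ A s s'
  · rw [Finset.sum_eq_single_of_mem s (by simp [hterm])]
    · rw [trajFS_self]
      simp [pathProd_singleton]
    · intro x hx hxs
      apply Finset.sum_eq_zero
      intro l hl
      rw [mem_trajFS] at hl
      obtain ⟨hc, hh, hg⟩ := hl
      exfalso
      match l with
      | [] => simp at hh
      | [a] =>
        simp only [List.head?_cons, Option.some.injEq] at hh
        simp only [List.getLast?_singleton, Option.some.injEq] at hg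
        exact hxs (hg ▸ hh ▸ rfl)
      | a :: b :: t =>
        simp only [List.head?_cons, Option.some.injEq] at hh
        subst hh
        exact hterm b (List.isChain_cons_cons.mp hc).1
  · push_neg at hterm
    have key : ∀ x ∈ Finset.univ.filter (fun x => ∀ s', ¬ A x s'),
        ∑ l ∈ trajFS A hacyc s x, pathProd PF l
          = ∑ s' ∈ Finset.univ.filter (fun s' => A s s'), PF s s' *
              ∑ l ∈ trajFS A hacyc s' x, pathProd PF l := by
      intro x hx
      simp only [Finset.mem_filter, Finset.mem_univ, true_and] at hx
      have hne : s ≠ x := by rintro rfl; exact hx _ hterm.choose_spec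
      have hdisj : (↑(Finset.univ.filter (fun s' => A s s')) : Set S).PairwiseDisjoint
          (fun s' => (trajFS A hacyc s' x).image (List.cons s)) := by
        intro a _ b _ hab
        refine Finset.disjoint_left.mpr ?_
        intro l hla hlb
        simp only [Finset.mem_image] at hla hlb
        obtain ⟨t1, ht1, e1⟩ := hla
        obtain ⟨t2, ht2, e2⟩ := hlb
        rw [← e2] at e1
        have ht12 : t1 = t2 := (List.cons.injEq _ _ _ _).mp e1 |>.2
        subst ht12
        have h1 := (mem_trajFS A).mp ht1 |>.2.1
        have h2 := (mem_trajFS A).mp ht2 |>.2.1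
        rw [h1] at h2
        exact hab (Option.some.inj h2)
      rw [traj_decomp_fwd A hacyc s x hne, Finset.sum_biUnion hdisj]
      refine Finset.sum_congr rfl ?_
      intro s' hs'
      rw [Finset.sum_image (fun a _ b _ h => ((List.cons.injEq _ _ _ _).mp h).2),
        Finset.mul_sum]
      refine Finset.sum_congr rfl ?_
      intro l hl
      rw [mem_trajFS] at hl
      match l with
      | [] => simp at hl
      | b :: t =>
        have hb : b = s' := by
          have := hl.2.1
          simpa using this
        subst hb
        exact pathProd_cons PF s b t
    rw [Finset.sum_congr rfl key, Finset.sum_comm]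
    have step : ∀ s' ∈ Finset.univ.filter (fun s' => A s s'),
        (∑ x ∈ Finset.univ.filter (fun x => ∀ u, ¬ A x u),
          PF s s' * ∑ l ∈ trajFS A hacyc s' x, pathProd PF l) = PF s s' := by
      intro s' hs'
      simp only [Finset.mem_filter, Finset.mem_univ, true_and] at hs'
      rw [← Finset.mul_sum, IH s' (Relation.TransGen.single hs'), mul_one]
    rw [Finset.sum_congr rfl step]
    exact hPFsum s hterm

lemma BSum_one (s0 : S) (huniq : ∀ s', (∀ s, ¬ A s s') → s' = s0)
    (PB : S → S → ℝ)
    (hPBsum : ∀ s', (∃ s, A s s') →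
      ∑ s ∈ Finset.univ.filter (fun s => A s s'), PB s s' = 1) :
    ∀ x : S, ∑ l ∈ trajFS A hacyc s0 x, pathProd PB l = 1 := by
  haveI : IsTrans S (Relation.TransGen A) := ⟨fun _ _ _ => Relation.TransGen.trans⟩
  haveI : IsIrrefl S (Relation.TransGen A) := ⟨hacyc⟩
  have hwf := Finite.wellFounded_of_trans_of_irrefl (Relation.TransGen A)
  intro x
  induction x using hwf.induction with
  | _ x IH =>
  by_cases hx0 : x = s0
  · subst hx0
    rw [trajFS_self]
    simp [pathProd_singleton]
  · have hpar : ∃ p, A p x := by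
      by_contra h
      push_neg at h
      exact hx0 (huniq x h)
    have hne : s0 ≠ x := fun h => hx0 h.symm
    have hdisj : (↑(Finset.univ.filter (fun p => A p x)) : Set S).PairwiseDisjoint
        (fun p => (trajFS A hacyc s0 p).image (fun l => l ++ [x])) := by
      intro a _ b _ hab
      refine Finset.disjoint_left.mpr ?_
      intro l hla hlb
      simp only [Finset.mem_image] at hla hlb
      obtain ⟨t1, ht1, e1⟩ := hla
      obtain ⟨t2, ht2, e2⟩ := hlb
      rw [← e2] at e1
      have ht12 : t1 = t2 := List.append_left_injective [x] e1
      subst ht12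
      have h1 := (mem_trajFS A).mp ht1 |>.2.2
      have h2 := (mem_trajFS A).mp ht2 |>.2.2
      rw [h1] at h2
      exact hab (Option.some.inj h2)
    rw [traj_decomp_bwd A hacyc s0 x hne, Finset.sum_biUnion hdisj]
    have step : ∀ p ∈ Finset.univ.filter (fun p => A p x),
        (∑ l ∈ (trajFS A hacyc s0 p).image (fun l => l ++ [x]), pathProd PB l)
          = PB p x := by
      intro p hp
      simp only [Finset.mem_filter, Finset.mem_univ, true_and] at hp
      rw [Finset.sum_image (fun a _ b _ h => List.append_left_injective [x] h)]
      have : ∀ l ∈ trajFS A hacyc s0 p,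
          pathProd PB (l ++ [x]) = pathProd PB l * PB p x := by
        intro l hl
        exact pathProd_append_last PB l p x ((mem_trajFS A).mp hl).2.2
      rw [Finset.sum_congr rfl this, ← Finset.sum_mul,
        IH p (Relation.TransGen.single hp), one_mul]
    rw [Finset.sum_congr rfl step]
    exact hPBsum x hpar

end Sums

/-- If the trajectory balance constraint
`Z·∏ P_F(s_i|s_{i−1}) = R(s_n)·∏ P_B(s_{i−1}|s_i)` holds for every complete
trajectory `s_0 → ⋯ → s_n` of a finite DAG (with `P_B` a backward policy summing to 1
over parents), then the marginal terminating distribution satisfies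
`P_F^⊤(x) = R(x)/Z` for each terminal state `x`, and consequently
`Z = Σ_{x ∈ X} R(x)`.  Here `PB s s' = P_B(s|s')`. -/
theorem stmt_3 {S : Type*} [Fintype S] [DecidableEq S]
    (A : S → S → Prop) [DecidableRel A]
    (hacyc : ∀ s, ¬ Relation.TransGen A s s)
    (s0 : S) (hinit : ∀ s, ¬ A s s0)
    (huniq : ∀ s', (∀ s, ¬ A s s') → s' = s0)
    (PF PB : S → S → ℝ) (Z : ℝ) (hZ : 0 < Z)
    (hPFnonneg : ∀ s s', 0 ≤ PF s s')
    (hPFsupp : ∀ s s', ¬ A s s' → PF s s' = 0)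
    (hPFsum : ∀ s, (∃ s', A s s') →
      ∑ s' ∈ Finset.univ.filter (fun s' => A s s'), PF s s' = 1)
    (hPBnonneg : ∀ s s', 0 ≤ PB s s')
    (hPBsupp : ∀ s s', ¬ A s s' → PB s s' = 0)
    (hPBsum : ∀ s', (∃ s, A s s') →
      ∑ s ∈ Finset.univ.filter (fun s => A s s'), PB s s' = 1)
    (R : S → ℝ) (hRpos : ∀ x, (∀ s', ¬ A x s') → 0 < R x)
    (hTB : ∀ (l : List S), l.Chain' A → l.head? = some s0 →
      (∀ x, l.getLast? = some x → (∀ s', ¬ A x s') →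
        Z * pathProd PF l = R x * pathProd PB l)) :
    (∀ x, (∀ s', ¬ A x s') → (∑' τ : Traj A s0 x, pathProd PF τ.1) = R x / Z) ∧
    Z = ∑ x ∈ Finset.univ.filter (fun x => ∀ s', ¬ A x s'), R x := by
  have hB := BSum_one A hacyc s0 huniq PB hPBsum
  have hF := FSum_one A hacyc PF hPFsum s0
  have hmain : ∀ x, (∀ s', ¬ A x s') →
      ∑ l ∈ trajFS A hacyc s0 x, pathProd PF l = R x / Z := by
    intro x hx
    have hcong : ∀ l ∈ trajFS A hacyc s0 x,
        pathProd PF l = (R x / Z) * pathProd PB l := by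
      intro l hl
      obtain ⟨hc, hh, hg⟩ := (mem_trajFS A).mp hl
      have htb := hTB l hc hh x hg hx
      field_simp
      linarith [htb]
    rw [Finset.sum_congr rfl hcong, ← Finset.mul_sum, hB x, mul_one]
  constructor
  · intro x hx
    haveI F1 : Fintype {l : List S // l.Chain' A ∧ l.head? = some s0 ∧ l.getLast? = some x} :=
      Set.Finite.fintype (trajSet_finite A hacyc s0 x)
    haveI F2 : Fintype (Traj A s0 x) := F1
    calc (∑' τ : Traj A s0 x, pathProd PF τ.1)
        = ∑ τ : Traj A s0 x, pathProd PF τ.1 := tsum_fintype _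
      _ = ∑ l ∈ trajFS A hacyc s0 x, pathProd PF l :=
          (Finset.sum_subtype _ (fun l => mem_trajFS A) (pathProd PF)).symm
      _ = R x / Z := hmain x hx
  · have h1 : ∀ x ∈ Finset.univ.filter (fun x => ∀ s', ¬ A x s'),
        ∑ l ∈ trajFS A hacyc s0 x, pathProd PF l = R x / Z := by
      intro x hx
      simp only [Finset.mem_filter, Finset.mem_univ, true_and] at hx
      exact hmain x hx
    rw [Finset.sum_congr rfl h1] at hF
    rw [← Finset.sum_div] at hF
    field_simp at hF
    exact hF.symm
end

section
/- If detailed balance holds on all edges of a finite DAG with unique initial state s_0, and the forward policy P_F sums to 1 over children at each nonterminal state, then the total flow into terminal states equals the flow at the initial state: Σ_{x ∈ X} F(x) = F(s_0). -/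
/-! Count the total edge flow `Σ_{s → s'} F(s) P_F(s'|s)` twice. Grouped by source, the forward
policy sums to one, so it is the flow of the nonterminal states; rewritten by detailed balance as
`Σ F(s') P_B(s|s')` and grouped by target, the backward policy sums to one, so it is the flow of
the noninitial states. Removing these two equal sums from the total flow `Σ_s F(s)` leaves the
terminal states on one side and `s₀` alone on the other. -/

open Finset

section EdgeFlow

variable {S : Type*} [Fintype S] (R : S → S → Prop) [DecidableRel R]

theorem sum_sum_filter_rel_comm (f : S → S → ℝ) :
    ∑ s, ∑ s' ∈ univ.filter (R s), f s s' = ∑ s', ∑ s ∈ univ.filter (R · s'), f s s' :=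
  sum_comm' fun _ _ => by simp

theorem sum_sum_filter_rel_mul_eq_sum_filter (p : S → Prop) [DecidablePred p] (F : S → ℝ)
    (Q : S → S → ℝ) (hQ : ∀ s, p s → ∑ s' ∈ univ.filter (R s), Q s s' = 1)
    (hp : ∀ s, ¬ p s → ∀ s', ¬ R s s') :
    ∑ s, ∑ s' ∈ univ.filter (R s), F s * Q s s' = ∑ s ∈ univ.filter p, F s := by
  rw [sum_filter]
  refine sum_congr rfl fun s _ => ?_
  split_ifs with hs
  · rw [← mul_sum, hQ s hs, mul_one]
  · exact sum_eq_zero fun s' hs' => absurd (mem_filter.1 hs').2 (hp s hs s')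

end EdgeFlow

theorem stmt_10_general {S : Type*} [Fintype S]
    (A : S → S → Prop) [DecidableRel A]
    (s0 : S) (hinit : ∀ s, ¬ A s s0)
    (F : S → ℝ)
    (PF PB : S → S → ℝ)
    (hPFsum : ∀ s, (∃ s', A s s') →
      ∑ s' ∈ Finset.univ.filter (fun s' => A s s'), PF s s' = 1)
    (hPBsum : ∀ s', s' ≠ s0 →
      ∑ s ∈ Finset.univ.filter (fun s => A s s'), PB s s' = 1)
    (hDB : ∀ s s', A s s' → F s * PF s s' = F s' * PB s s') :
    ∑ x ∈ Finset.univ.filter (fun x => ∀ s', ¬ A x s'), F x = F s0 := by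
  classical
  have hout := sum_sum_filter_rel_mul_eq_sum_filter A (fun s => ∃ s', A s s') F PF hPFsum
    fun s hs => not_exists.1 hs
  have hin := sum_sum_filter_rel_mul_eq_sum_filter (fun s' s => A s s') (· ≠ s0) F
    (fun s' s => PB s s') hPBsum fun s' hs => by rw [not_ne_iff.1 hs]; exact hinit
  have hbalance : ∑ s, ∑ s' ∈ univ.filter (A s), F s * PF s s'
      = ∑ s', ∑ s ∈ univ.filter (A · s'), F s' * PB s s' := by
    rw [sum_sum_filter_rel_comm]
    exact sum_congr rfl fun s' _ => sum_congr rfl fun s hs => hDB s s' (mem_filter.1 hs).2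
  have hsplit := sum_filter_add_sum_filter_not univ (fun s => ∃ s', A s s') F
  simp only [not_exists] at hsplit
  rw [← hout, hbalance, hin, filter_ne', ← add_sum_erase univ F (mem_univ s0)] at hsplit
  linarith

/-- If detailed balance holds on all edges of a finite DAG with unique
initial state `s0` (no incoming edges) and terminal states `X` (no outgoing edges),
with the forward policy `PF` summing to 1 over children at each nonterminal state and
the backward policy `PB` (`PB s s' = P_B(s|s')`) summing to 1 over parents at each
noninitial state, then the total flow into terminal states equals the flow at the
initial state: `Σ_{x ∈ X} F(x) = F(s0)`. -/
theorem stmt_10 {S : Type*} [Fintype S]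
    (A : S → S → Prop) [DecidableRel A]
    (hacyc : ∀ s, ¬ Relation.TransGen A s s)
    (s0 : S) (hinit : ∀ s, ¬ A s s0)
    (huniq : ∀ s', (∀ s, ¬ A s s') → s' = s0)
    (F : S → ℝ) (hFpos : ∀ s, 0 < F s)
    (PF PB : S → S → ℝ)
    (hPFsum : ∀ s, (∃ s', A s s') →
      ∑ s' ∈ Finset.univ.filter (fun s' => A s s'), PF s s' = 1)
    (hPBsum : ∀ s', s' ≠ s0 →
      ∑ s ∈ Finset.univ.filter (fun s => A s s'), PB s s' = 1)
    (hDB : ∀ s s', A s s' → F s * PF s s' = F s' * PB s s') :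
    ∑ x ∈ Finset.univ.filter (fun x => ∀ s', ¬ A x s'), F x = F s0 :=
  stmt_10_general A s0 hinit F PF PB hPFsum hPBsum hDB
end

section
/- Given two triples (F₁, P_F, P_B₁) and (F₂, P_F, P_B₂) both satisfying detailed balance on a finite connected DAG (every state reachable from s_0 via positive-probability P_F edges) with the same boundary condition F₁(x) = F₂(x) = R(x) on terminal states, it follows that F₁ = F₂ and P_B₁ = P_B₂ everywhere. -/
/-!
Detailed balance together with `∑ₚ P_B(p|s) = 1` gives the flow-matching recursion
`F s = ∑ₚ F p · P_F(s|p)` at every noninitial state, a linear recursion along the acyclic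
edge relation. Two solutions therefore agree up to the factor fixed at `s₀`, and the boundary
condition at any terminal state forces that factor to be `1`. Once the flows agree, detailed
balance determines `P_B` on every edge.
-/

open Finset Relation

section FlowMatching

variable {S : Type*} {A : S → S → Prop}

lemma wellFounded_transGen_of_acyclic [Finite S] (hacyc : ∀ s, ¬ TransGen A s s) :
    WellFounded (TransGen A) :=
  have : IsTrans S (TransGen A) := ⟨fun _ _ _ => TransGen.trans⟩
  have : Std.Irrefl (TransGen A) := ⟨hacyc⟩
  Finite.wellFounded_of_trans_of_irrefl _

lemma exists_terminal_of_acyclic [Finite S] [Nonempty S] (hacyc : ∀ s, ¬ TransGen A s s) :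
    ∃ x, ∀ s, ¬ A x s := by
  have hwf : WellFounded (TransGen (Function.swap A)) :=
    wellFounded_transGen_of_acyclic fun s h => hacyc s (transGen_swap.mp h)
  obtain ⟨x, -, hx⟩ := hwf.has_min Set.univ Set.univ_nonempty
  exact ⟨x, fun s h => hx s trivial (TransGen.single h)⟩

lemma backward_eq_of_detailedBalance {PF PB₁ PB₂ : S → S → ℝ} {F : S → ℝ}
    (hF : ∀ s, F s ≠ 0)
    (hPB₁supp : ∀ s s', ¬ A s s' → PB₁ s s' = 0) (hPB₂supp : ∀ s s', ¬ A s s' → PB₂ s s' = 0)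
    (hDB₁ : ∀ s s', A s s' → F s * PF s s' = F s' * PB₁ s s')
    (hDB₂ : ∀ s s', A s s' → F s * PF s s' = F s' * PB₂ s s') :
    PB₁ = PB₂ := by
  funext s s'
  by_cases h : A s s'
  · exact mul_left_cancel₀ (hF s') ((hDB₁ s s' h).symm.trans (hDB₂ s s' h))
  · rw [hPB₁supp s s' h, hPB₂supp s s' h]

variable [Fintype S] [DecidableRel A]

variable (A) in
def inflow (PF : S → S → ℝ) (F : S → ℝ) (s : S) : ℝ :=
  ∑ p ∈ univ.filter (fun p => A p s), F p * PF p s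

lemma eq_inflow_of_detailedBalance {PF PB : S → S → ℝ} {F : S → ℝ} {s : S}
    (hsum : ∑ p ∈ univ.filter (fun p => A p s), PB p s = 1)
    (hDB : ∀ p, A p s → F p * PF p s = F s * PB p s) :
    F s = inflow A PF F s := by
  calc F s = ∑ p ∈ univ.filter (fun p => A p s), F s * PB p s := by rw [← mul_sum, hsum, mul_one]
    _ = inflow A PF F s := sum_congr rfl fun p hp => (hDB p (mem_filter.mp hp).2).symm

lemma mul_eq_mul_of_eq_inflow {PF : S → S → ℝ} {F G : S → ℝ} {s0 : S}
    (hwf : WellFounded (TransGen A))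
    (hF : ∀ s, s ≠ s0 → F s = inflow A PF F s) (hG : ∀ s, s ≠ s0 → G s = inflow A PF G s)
    (s : S) : F s * G s0 = G s * F s0 := by
  induction s using hwf.induction with
  | _ s ih =>
    obtain rfl | hs := eq_or_ne s s0
    · exact mul_comm _ _
    rw [hF s hs, hG s hs, inflow, inflow, sum_mul, sum_mul]
    refine sum_congr rfl fun p hp => ?_
    rw [mul_right_comm, ih p (TransGen.single (mem_filter.mp hp).2), mul_right_comm]

end FlowMatching

theorem stmt_17_general {S : Type*} [Fintype S]
    (A : S → S → Prop) [DecidableRel A]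
    (hacyc : ∀ s, ¬ Relation.TransGen A s s)
    (s0 : S)
    (PF : S → S → ℝ)
    (R : S → ℝ)
    (F₁ F₂ : S → ℝ) (PB₁ PB₂ : S → S → ℝ)
    (hF₂pos : ∀ s, 0 < F₂ s)
    (hPB₁supp : ∀ s s', ¬ A s s' → PB₁ s s' = 0)
    (hPB₂supp : ∀ s s', ¬ A s s' → PB₂ s s' = 0)
    (hPB₁sum : ∀ s', s' ≠ s0 →
      ∑ s ∈ Finset.univ.filter (fun s => A s s'), PB₁ s s' = 1)
    (hPB₂sum : ∀ s', s' ≠ s0 →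
      ∑ s ∈ Finset.univ.filter (fun s => A s s'), PB₂ s s' = 1)
    (hDB₁ : ∀ s s', A s s' → F₁ s * PF s s' = F₁ s' * PB₁ s s')
    (hDB₂ : ∀ s s', A s s' → F₂ s * PF s s' = F₂ s' * PB₂ s s')
    (hbound : ∀ x, (∀ s', ¬ A x s') → F₁ x = R x ∧ F₂ x = R x) :
    F₁ = F₂ ∧ PB₁ = PB₂ := by
  have hprop : ∀ s, F₁ s * F₂ s0 = F₂ s * F₁ s0 :=
    mul_eq_mul_of_eq_inflow (wellFounded_transGen_of_acyclic hacyc)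
      (fun s hs => eq_inflow_of_detailedBalance (hPB₁sum s hs) (hDB₁ · s))
      (fun s hs => eq_inflow_of_detailedBalance (hPB₂sum s hs) (hDB₂ · s))
  have : Nonempty S := ⟨s0⟩
  obtain ⟨x, hx⟩ := exists_terminal_of_acyclic hacyc
  obtain ⟨hx₁, hx₂⟩ := hbound x hx
  have hs0 : F₁ s0 = F₂ s0 := by
    have := hprop x
    rw [hx₁, ← hx₂] at this
    exact (mul_left_cancel₀ (hF₂pos x).ne' this).symm
  have hF : F₁ = F₂ := funext fun s =>
    mul_right_cancel₀ (hF₂pos s0).ne' (by rw [hprop s, hs0])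
  refine ⟨hF, ?_⟩
  subst hF
  exact backward_eq_of_detailedBalance (fun s => (hF₂pos s).ne') hPB₁supp hPB₂supp hDB₁ hDB₂

/-- Given two triples `(F₁, PF, PB₁)` and `(F₂, PF, PB₂)` both
satisfying detailed balance on a finite connected DAG (every state reachable from
`s0` via positive-probability `PF`-edges), with the same boundary condition
`F₁ x = F₂ x = R x` on terminal states, it follows that `F₁ = F₂` and `PB₁ = PB₂`
everywhere.  Here `PB s s' = P_B(s|s')`, backward policies are nonnegative, vanish
off edges and sum to 1 over parents of each noninitial state. -/
theorem stmt_17 {S : Type*} [Fintype S]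
    (A : S → S → Prop) [DecidableRel A]
    (hacyc : ∀ s, ¬ Relation.TransGen A s s)
    (s0 : S) (hinit : ∀ s, ¬ A s s0)
    (hreach : ∀ s, Relation.ReflTransGen A s0 s)
    (PF : S → S → ℝ)
    (hPFpos : ∀ s s', A s s' → 0 < PF s s')
    (hPFsum : ∀ s, (∃ s', A s s') →
      ∑ s' ∈ Finset.univ.filter (fun s' => A s s'), PF s s' = 1)
    (R : S → ℝ)
    (F₁ F₂ : S → ℝ) (PB₁ PB₂ : S → S → ℝ)
    (hF₁pos : ∀ s, 0 < F₁ s) (hF₂pos : ∀ s, 0 < F₂ s)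
    (hPB₁nonneg : ∀ s s', 0 ≤ PB₁ s s') (hPB₂nonneg : ∀ s s', 0 ≤ PB₂ s s')
    (hPB₁supp : ∀ s s', ¬ A s s' → PB₁ s s' = 0)
    (hPB₂supp : ∀ s s', ¬ A s s' → PB₂ s s' = 0)
    (hPB₁sum : ∀ s', s' ≠ s0 →
      ∑ s ∈ Finset.univ.filter (fun s => A s s'), PB₁ s s' = 1)
    (hPB₂sum : ∀ s', s' ≠ s0 →
      ∑ s ∈ Finset.univ.filter (fun s => A s s'), PB₂ s s' = 1)
    (hDB₁ : ∀ s s', A s s' → F₁ s * PF s s' = F₁ s' * PB₁ s s')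
    (hDB₂ : ∀ s s', A s s' → F₂ s * PF s s' = F₂ s' * PB₂ s s')
    (hbound : ∀ x, (∀ s', ¬ A x s') → F₁ x = R x ∧ F₂ x = R x) :
    F₁ = F₂ ∧ PB₁ = PB₂ :=
  stmt_17_general A hacyc s0 PF R F₁ F₂ PB₁ PB₂ hF₂pos hPB₁supp hPB₂supp hPB₁sum hPB₂sum hDB₁ hDB₂
    hbound
end
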